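/- Let L, M, N ⊆ [m] with L and M proper subsets of [m], and let C = C(Δ_L^c, Δ_M^c, Δ_N). If max{|L|, |M|} ≤ m − 2, then C is a minimal code; moreover, if |N| ≥ 3, then C is self-orthogonal. -/
import Mathlib


open Finset Polynomial
open scoped Classical

/-- `V m` is the vector space `F₂^m`. -/
abbrev V (m : ℕ) := Fin m → ZMod 2

/-- Dot product `x·y = Σ_i x_i y_i` in `F₂`. -/
def dot {m : ℕ} (x y : V m) : ZMod 2 := ∑ i, x i * y i

/-- `Supp v = {i : v i ≠ 0}`. -/
def supp {m : ℕ} (v : V m) : Finset (Fin m) := Finset.univ.filter fun i => v i ≠ 0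

/-- The simplicial complex `Δ_L = {v : Supp v ⊆ L}` generated by `L`. -/
def Δ {m : ℕ} (L : Finset (Fin m)) : Finset (V m) := Finset.univ.filter fun v => supp v ⊆ L

/-- Hamming weight of a vector. -/
def wtv {ι : Type} [Fintype ι] (c : ι → ZMod 2) : ℕ :=
  (Finset.univ.filter fun i => c i ≠ 0).card

/-- The linear functional `x ↦ x·y`. -/
noncomputable def dotL {m : ℕ} (y : V m) : V m →ₗ[ZMod 2] ZMod 2 :=
  ∑ i, LinearMap.smulRight (LinearMap.proj i) (y i)

/-- The linear map `(α,β,γ) ↦ ((d₁,d₂,d₃) ↦ α·d₁ + (β+γ)·d₂ + β·d₃)` whose range is the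
binary code `C(D₁,D₂,D₃)`. -/
noncomputable def codeMap {m : ℕ} (D₁ D₂ D₃ : Finset (V m)) :
    (V m × V m × V m) →ₗ[ZMod 2]
      (({x // x ∈ D₁} × {x // x ∈ D₂} × {x // x ∈ D₃}) → ZMod 2) :=
  LinearMap.pi fun d =>
    (dotL d.1.1).comp (LinearMap.fst (ZMod 2) (V m) (V m × V m))
    + (dotL d.2.1.1).comp
        (((LinearMap.fst (ZMod 2) (V m) (V m)).comp (LinearMap.snd (ZMod 2) (V m) (V m × V m)))
          + ((LinearMap.snd (ZMod 2) (V m) (V m)).comp (LinearMap.snd (ZMod 2) (V m) (V m × V m))))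
    + (dotL d.2.2.1).comp
        ((LinearMap.fst (ZMod 2) (V m) (V m)).comp (LinearMap.snd (ZMod 2) (V m) (V m × V m)))

lemma codeMap_apply {m : ℕ} (D₁ D₂ D₃ : Finset (V m)) (α β γ : V m)
    (d : {x // x ∈ D₁} × {x // x ∈ D₂} × {x // x ∈ D₃}) :
    codeMap D₁ D₂ D₃ (α, β, γ) d = dot α d.1.1 + dot (β + γ) d.2.1.1 + dot β d.2.2.1 := by
  simp [codeMap, dotL, dot, LinearMap.smulRight, mul_comm]

/-- A binary linear code (given as a set of codewords) is minimal if the support of a nonzero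
codeword never strictly contains the support of another nonzero codeword. -/
def IsMinimalCode {ι : Type} (C : Set (ι → ZMod 2)) : Prop :=
  ∀ u ∈ C, u ≠ 0 → ∀ v ∈ C, v ≠ 0 → Function.support v ⊆ Function.support u → v = u

/-- A binary code is self-orthogonal if any two codewords are orthogonal. -/
def IsSelfOrthogonal {ι : Type} [Fintype ι] (C : Set (ι → ZMod 2)) : Prop :=
  ∀ c ∈ C, ∀ c' ∈ C, ∑ i, c i * c' i = 0

/-! ### Auxiliary material -/

namespace Stmt16Aux

variable {m : ℕ}

lemma mem_Δ {T : Finset (Fin m)} {v : V m} : v ∈ Δ T ↔ ∀ i, v i ≠ 0 → i ∈ T := by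
  simp [Δ, supp, Finset.subset_iff]

/-- standard basis vector -/
def ee (k : Fin m) : V m := fun i => if i = k then 1 else 0

lemma add_ee_apply_ne (v : V m) {k i : Fin m} (h : i ≠ k) : (v + ee k) i = v i := by
  simp [ee, h]

lemma add_ee_add_ee (v : V m) (k : Fin m) : v + ee k + ee k = v := by
  funext i
  by_cases h : i = k
  · simp only [Pi.add_apply, ee, if_pos h]
    have hx : ∀ x : ZMod 2, x + 1 + 1 = x := by decide
    exact hx _
  · simp [ee, h]

lemma add_ee_ne (v : V m) (k : Fin m) : v + ee k ≠ v := by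
  intro h
  have h2 := congrFun h k
  simp only [Pi.add_apply, ee, if_pos rfl] at h2
  have : ∀ x : ZMod 2, x + 1 ≠ x := by decide
  exact this (v k) h2

lemma dot_add_ee (w v : V m) (k : Fin m) : dot w (v + ee k) = dot w v + w k := by
  unfold dot
  simp only [Pi.add_apply, mul_add, Finset.sum_add_distrib]
  congr 1
  simp [ee, mul_ite]

lemma sum_shift {R : Type} [AddCommGroup R] (S : Finset (V m)) (k : Fin m)
    (hS : ∀ v ∈ S, v + ee k ∈ S) (f : V m → R) (hf : ∀ v, f (v + ee k) = - f v) :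
    ∑ v ∈ S, f v = 0 := by
  refine Finset.sum_involution (fun v _ => v + ee k) (fun v hv => by rw [hf]; exact add_neg_cancel _)
    (fun v hv _ => add_ee_ne v k) (fun v hv => hS v hv) (fun v hv => add_ee_add_ee v k)

lemma Δ_shift {T : Finset (Fin m)} {k : Fin m} (hk : k ∈ T) :
    ∀ v ∈ Δ T, v + ee k ∈ Δ T := by
  intro v hv
  rw [mem_Δ] at hv ⊢
  intro i hi
  by_cases h : i = k
  · exact h ▸ hk
  · exact hv i (by rwa [add_ee_apply_ne v h] at hi)

lemma Δc_shift {T : Finset (Fin m)} {k : Fin m} (hk : k ∈ T) :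
    ∀ v ∈ (Δ T)ᶜ, v + ee k ∈ (Δ T)ᶜ := by
  intro v hv
  rw [Finset.mem_compl] at hv ⊢
  intro h
  have h2 := Δ_shift hk _ h
  rw [add_ee_add_ee] at h2
  exact hv h2

lemma card_V : Fintype.card (V m) = 2 ^ m := by
  rw [Fintype.card_fun, ZMod.card, Fintype.card_fin]

lemma card_Δ (T : Finset (Fin m)) : (Δ T).card = 2 ^ T.card := by
  have h : (Δ T).card = (Finset.univ : Finset (↥T → ZMod 2)).card := by
    refine Finset.card_bij' (fun v _ => fun j : ↥T => v j.1)
      (fun f _ => fun i => if h : i ∈ T then f ⟨i, h⟩ else 0)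
      (fun a _ => Finset.mem_univ _) ?_ ?_ ?_
    · intro f _
      rw [mem_Δ]
      intro i hi
      by_contra h
      simp [h] at hi
    · intro v hv
      funext i
      by_cases h : i ∈ T
      · simp [h]
      · simp only [dif_neg h]
        by_contra h2
        exact h (mem_Δ.mp hv i fun h3 => h2 h3.symm)
    · intro f _
      funext j
      simp [j.2]
  rw [h, Finset.card_univ, Fintype.card_fun, ZMod.card, Fintype.card_coe]

lemma dot_zero_left (v : V m) : dot 0 v = 0 := by simp [dot]

lemma dot_eq_zero_of_disj {T : Finset (Fin m)} {w v : V m}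
    (h : ∀ i, w i ≠ 0 → i ∉ T) (hv : v ∈ Δ T) : dot w v = 0 := by
  unfold dot
  apply Finset.sum_eq_zero
  intro i _
  by_cases hw : w i = 0
  · simp [hw]
  · have hvi : v i = 0 := by
      by_contra hvi
      exact h i hw (mem_Δ.mp hv i hvi)
    simp [hvi]

/-! ### The sign character -/

def eps (x : ZMod 2) : ℤ := 1 - 2 * x.val

lemma eps_add (x y : ZMod 2) : eps (x + y) = eps x * eps y := by revert x y; decide

lemma eps_add_one (x : ZMod 2) : eps (x + 1) = - eps x := by revert x; decide

lemma sum_eps_zero (S : Finset (V m)) (w : V m) (k : Fin m) (hk : w k ≠ 0)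
    (hS : ∀ v ∈ S, v + ee k ∈ S) : ∑ v ∈ S, eps (dot w v) = 0 := by
  apply sum_shift S k hS
  intro v
  rw [dot_add_ee]
  have hw : w k = 1 := by
    have : ∀ x : ZMod 2, x ≠ 0 → x = 1 := by decide
    exact this _ hk
  rw [hw, eps_add_one]

lemma sum_eps_const (S : Finset (V m)) (w : V m) (h : ∀ v ∈ S, dot w v = 0) :
    ∑ v ∈ S, eps (dot w v) = (S.card : ℤ) := by
  rw [Finset.sum_congr rfl (fun v hv => by rw [h v hv])]
  simp [eps]

/-- Case: `w` has support meeting `T`: the sum over the complement of `Δ T` vanishes. -/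
lemma sum_eps_compl_inter {T : Finset (Fin m)} {w : V m}
    (h : (supp w ∩ T).Nonempty) : ∑ v ∈ (Δ T)ᶜ, eps (dot w v) = 0 := by
  obtain ⟨k, hk⟩ := h
  rw [Finset.mem_inter, supp, Finset.mem_filter] at hk
  exact sum_eps_zero _ w k hk.1.2 (Δc_shift hk.2)

/-- Case: `w` has support meeting `N`: the sum over `Δ N` vanishes. -/
lemma sum_eps_Δ_inter {T : Finset (Fin m)} {w : V m}
    (h : (supp w ∩ T).Nonempty) : ∑ v ∈ Δ T, eps (dot w v) = 0 := by
  obtain ⟨k, hk⟩ := h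
  rw [Finset.mem_inter, supp, Finset.mem_filter] at hk
  exact sum_eps_zero _ w k hk.1.2 (Δ_shift hk.2)

lemma disj_of_not_nonempty {T : Finset (Fin m)} {w : V m}
    (h : ¬ (supp w ∩ T).Nonempty) : ∀ i, w i ≠ 0 → i ∉ T := by
  intro i hwi hiT
  exact h ⟨i, Finset.mem_inter.mpr ⟨by simp [supp, hwi], hiT⟩⟩

lemma sum_eps_Δ_disj {T : Finset (Fin m)} {w : V m}
    (h : ¬ (supp w ∩ T).Nonempty) : ∑ v ∈ Δ T, eps (dot w v) = ((Δ T).card : ℤ) :=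
  sum_eps_const _ _ fun v hv => dot_eq_zero_of_disj (disj_of_not_nonempty h) hv

lemma sum_eps_compl_disj {T : Finset (Fin m)} {w : V m} (hw : w ≠ 0)
    (h : ¬ (supp w ∩ T).Nonempty) :
    ∑ v ∈ (Δ T)ᶜ, eps (dot w v) = -((Δ T).card : ℤ) := by
  have huniv : ∑ v ∈ (Finset.univ : Finset (V m)), eps (dot w v) = 0 := by
    obtain ⟨k, hk⟩ := Function.ne_iff.mp hw
    exact sum_eps_zero _ w k (by simpa using hk) (fun v _ => Finset.mem_univ _)
  have hsplit := Finset.sum_add_sum_compl (Δ T) (fun v => eps (dot w v))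
  rw [huniv, sum_eps_Δ_disj h] at hsplit
  linarith

/-! ### Weight formula -/

lemma two_mul_wt (D₁ D₂ D₃ : Finset (V m)) (α β γ : V m) :
    2 * ((Finset.univ.filter fun d => codeMap D₁ D₂ D₃ (α, β, γ) d ≠ 0).card : ℤ)
      = (D₁.card : ℤ) * D₂.card * D₃.card
        - (∑ v ∈ D₁, eps (dot α v)) * (∑ v ∈ D₂, eps (dot (β + γ) v))
            * (∑ v ∈ D₃, eps (dot β v)) := by
  classical
  have key : ∀ x : ZMod 2, (2 : ℤ) * (if x ≠ 0 then 1 else 0) = 1 - eps x := by decide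
  have hcard : ((Finset.univ.filter fun d => codeMap D₁ D₂ D₃ (α, β, γ) d ≠ 0).card : ℤ)
      = ∑ d : {x // x ∈ D₁} × {x // x ∈ D₂} × {x // x ∈ D₃},
          (if codeMap D₁ D₂ D₃ (α, β, γ) d ≠ 0 then (1 : ℤ) else 0) := by
    rw [Finset.card_filter]
    push_cast
    rfl
  rw [hcard, Finset.mul_sum]
  have step1 : ∀ d : {x // x ∈ D₁} × {x // x ∈ D₂} × {x // x ∈ D₃},
      (2 : ℤ) * (if codeMap D₁ D₂ D₃ (α, β, γ) d ≠ 0 then (1 : ℤ) else 0)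
        = 1 - eps (dot α d.1.1) * eps (dot (β + γ) d.2.1.1) * eps (dot β d.2.2.1) := by
    intro d
    rw [key, codeMap_apply, eps_add, eps_add]
  rw [Finset.sum_congr rfl fun d _ => step1 d, Finset.sum_sub_distrib]
  have hones : ∑ _d : {x // x ∈ D₁} × {x // x ∈ D₂} × {x // x ∈ D₃}, (1 : ℤ)
      = (D₁.card : ℤ) * D₂.card * D₃.card := by
    rw [Finset.sum_const, Finset.card_univ, Fintype.card_prod, Fintype.card_prod,
      Fintype.card_coe, Fintype.card_coe, Fintype.card_coe]
    push_cast
    ring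
  have hfact : ∑ d : {x // x ∈ D₁} × {x // x ∈ D₂} × {x // x ∈ D₃},
      eps (dot α d.1.1) * eps (dot (β + γ) d.2.1.1) * eps (dot β d.2.2.1)
      = (∑ v ∈ D₁, eps (dot α v)) * (∑ v ∈ D₂, eps (dot (β + γ) v))
          * (∑ v ∈ D₃, eps (dot β v)) := by
    rw [← Finset.sum_coe_sort D₁ (fun v => eps (dot α v)),
      ← Finset.sum_coe_sort D₂ (fun v => eps (dot (β + γ) v)),
      ← Finset.sum_coe_sort D₃ (fun v => eps (dot β v))]
    simp only [Fintype.sum_prod_type, mul_assoc, ← Finset.mul_sum, ← Finset.sum_mul]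
  rw [hones, hfact]

/-! ### Support splitting -/

lemma wt_split {ι : Type} [Fintype ι] (u v : ι → ZMod 2)
    (h : ∀ d, v d ≠ 0 → u d ≠ 0) :
    (Finset.univ.filter fun d => u d ≠ 0).card
      = (Finset.univ.filter fun d => v d ≠ 0).card
        + (Finset.univ.filter fun d => (u + v) d ≠ 0).card := by
  classical
  have key : ∀ a b : ZMod 2, (b ≠ 0 → a ≠ 0) →
      ((a ≠ 0 ↔ (b ≠ 0 ∨ a + b ≠ 0)) ∧ ¬(b ≠ 0 ∧ a + b ≠ 0)) := by decide
  have hdisj : Disjoint (Finset.univ.filter fun d => v d ≠ 0)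
      (Finset.univ.filter fun d => (u + v) d ≠ 0) := by
    rw [Finset.disjoint_left]
    intro d hd1 hd2
    rw [Finset.mem_filter] at hd1 hd2
    exact (key (u d) (v d) (h d)).2 ⟨hd1.2, by simpa using hd2.2⟩
  rw [← Finset.card_union_of_disjoint hdisj]
  congr 1
  ext d
  simp only [Finset.mem_union, Finset.mem_filter, Finset.mem_univ, true_and, Pi.add_apply]
  exact (key (u d) (v d) (h d)).1

/-! ### The vanishing inner sums for self-orthogonality -/

lemma sum_pair_zero {N : Finset (Fin m)} (hN : 3 ≤ N.card) (i j : Fin m) :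
    ∑ v ∈ Δ N, v i * v j = 0 := by
  by_cases hi : i ∈ N
  · by_cases hj : j ∈ N
    · have hcard : 1 ≤ (N \ {i, j}).card := by
        have h1 := Finset.le_card_sdiff ({i, j} : Finset (Fin m)) N
        have h2 : ({i, j} : Finset (Fin m)).card ≤ 2 :=
          le_trans (Finset.card_insert_le _ _) (by simp)
        omega
      obtain ⟨k, hk⟩ := Finset.card_pos.mp hcard
      rw [Finset.mem_sdiff] at hk
      have hki : k ≠ i := fun h => hk.2 (by simp [h])
      have hkj : k ≠ j := fun h => hk.2 (by simp [h])
      apply sum_shift (Δ N) k (Δ_shift hk.1)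
      intro v
      rw [add_ee_apply_ne v (Ne.symm hki), add_ee_apply_ne v (Ne.symm hkj)]
      have hx : ∀ x : ZMod 2, x = -x := by decide
      exact hx _
    · apply Finset.sum_eq_zero
      intro v hv
      have : v j = 0 := by
        by_contra h
        exact hj (mem_Δ.mp hv j h)
      simp [this]
  · apply Finset.sum_eq_zero
    intro v hv
    have : v i = 0 := by
      by_contra h
      exact hi (mem_Δ.mp hv i h)
    simp [this]

lemma sum_coord_zero {N : Finset (Fin m)} (hN : 3 ≤ N.card) (i : Fin m) :
    ∑ v ∈ Δ N, v i = 0 := by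
  have h : ∀ v : V m, v i = v i * v i := by
    intro v
    have : ∀ x : ZMod 2, x = x * x := by decide
    exact this _
  rw [Finset.sum_congr rfl fun v _ => h v]
  exact sum_pair_zero hN i i

lemma sum_dot_zero {N : Finset (Fin m)} (hN : 3 ≤ N.card) (w : V m) :
    ∑ v ∈ Δ N, dot w v = 0 := by
  unfold dot
  rw [Finset.sum_comm]
  apply Finset.sum_eq_zero
  intro i _
  rw [← Finset.mul_sum, sum_coord_zero hN, mul_zero]

lemma sum_dot_dot_zero {N : Finset (Fin m)} (hN : 3 ≤ N.card) (w w' : V m) :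
    ∑ v ∈ Δ N, dot w v * dot w' v = 0 := by
  have h : ∀ v : V m, dot w v * dot w' v
      = ∑ i : Fin m, ∑ j : Fin m, w i * w' j * (v i * v j) := by
    intro v
    unfold dot
    rw [Finset.sum_mul_sum]
    exact Finset.sum_congr rfl fun i _ => Finset.sum_congr rfl fun j _ => by ring
  rw [Finset.sum_congr rfl fun v _ => h v, Finset.sum_comm]
  apply Finset.sum_eq_zero
  intro i _
  rw [Finset.sum_comm]
  apply Finset.sum_eq_zero
  intro j _
  rw [← Finset.mul_sum, sum_pair_zero hN, mul_zero]

lemma card_Δ_zero {N : Finset (Fin m)} (hN : 3 ≤ N.card) :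
    (((Δ N).card : ZMod 2)) = 0 := by
  rw [card_Δ]
  have : N.card = N.card - 1 + 1 := by omega
  rw [this, pow_succ]
  push_cast
  have : (2 : ZMod 2) = 0 := by decide
  rw [this, mul_zero]

lemma inner_zero {N : Finset (Fin m)} (hN : 3 ≤ N.card) (a b : ZMod 2) (β β' : V m) :
    ∑ v ∈ Δ N, (a + dot β v) * (b + dot β' v) = 0 := by
  have expand : ∀ v : V m, (a + dot β v) * (b + dot β' v)
      = a * b + a * dot β' v + dot β v * b + dot β v * dot β' v := by
    intro v; ring
  have h1 : ∑ _v ∈ Δ N, a * b = 0 := by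
    rw [Finset.sum_const, nsmul_eq_mul, card_Δ_zero hN, zero_mul]
  have h2 : ∑ v ∈ Δ N, a * dot β' v = 0 := by
    rw [← Finset.mul_sum, sum_dot_zero hN, mul_zero]
  have h3 : ∑ v ∈ Δ N, dot β v * b = 0 := by
    rw [← Finset.sum_mul, sum_dot_zero hN, zero_mul]
  rw [Finset.sum_congr rfl fun v _ => expand v, Finset.sum_add_distrib,
    Finset.sum_add_distrib, Finset.sum_add_distrib, h1, h2, h3, sum_dot_dot_zero hN]
  simp

/-! ### Bounds on the character sums -/

lemma codeMap_eq_zero {D₁ D₂ : Finset (V m)} {N : Finset (Fin m)} {α β γ : V m}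
    (hα : α = 0) (hβγ : β + γ = 0) (hβ : ¬ (supp β ∩ N).Nonempty) :
    codeMap D₁ D₂ (Δ N) (α, β, γ) = 0 := by
  funext d
  rw [codeMap_apply, hα, hβγ, dot_zero_left, dot_zero_left,
    dot_eq_zero_of_disj (disj_of_not_nonempty hβ) d.2.2.2]
  simp

set_option maxHeartbeats 1600000 in
lemma prod_bounds {L M N : Finset (Fin m)} (hL2 : L.card + 2 ≤ m) (hM2 : M.card + 2 ≤ m)
    (α β γ : V m) (hnz : codeMap (Δ L)ᶜ (Δ M)ᶜ (Δ N) (α, β, γ) ≠ 0) :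
    16 * ((∑ v ∈ (Δ L)ᶜ, eps (dot α v)) * (∑ v ∈ (Δ M)ᶜ, eps (dot (β + γ) v))
        * (∑ v ∈ Δ N, eps (dot β v))) ≤ (2 : ℤ) ^ m * 2 ^ m * 2 ^ N.card
    ∧ -(4 * ((2 : ℤ) ^ m * 2 ^ m * 2 ^ N.card)) ≤
      16 * ((∑ v ∈ (Δ L)ᶜ, eps (dot α v)) * (∑ v ∈ (Δ M)ᶜ, eps (dot (β + γ) v))
        * (∑ v ∈ Δ N, eps (dot β v))) := by
  have h4L : 4 * (2 : ℤ) ^ L.card ≤ 2 ^ m := by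
    calc 4 * (2 : ℤ) ^ L.card = 2 ^ (L.card + 2) := by ring
    _ ≤ 2 ^ m := pow_le_pow_right₀ (by norm_num) hL2
  have h4M : 4 * (2 : ℤ) ^ M.card ≤ 2 ^ m := by
    calc 4 * (2 : ℤ) ^ M.card = 2 ^ (M.card + 2) := by ring
    _ ≤ 2 ^ m := pow_le_pow_right₀ (by norm_num) hM2
  have hZL : (0 : ℤ) < 2 ^ L.card := by positivity
  have hZM : (0 : ℤ) < 2 ^ M.card := by positivity
  have hZN : (0 : ℤ) < 2 ^ N.card := by positivity
  have hP : (0 : ℤ) < 2 ^ m := by positivity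
  have q0 : (0 : ℤ) < 2 ^ m * 2 ^ m * 2 ^ N.card := by positivity
  have k1 : ((2 : ℤ) ^ m - 2 ^ L.card) * (4 * 2 ^ M.card) * 2 ^ N.card
      ≤ 2 ^ m * 2 ^ m * 2 ^ N.card := by
    have h := mul_le_mul (show (2 : ℤ) ^ m - 2 ^ L.card ≤ 2 ^ m by linarith) h4M
      (by positivity) (by linarith)
    exact mul_le_mul_of_nonneg_right h hZN.le
  have k2 : (4 * (2 : ℤ) ^ L.card) * ((2 : ℤ) ^ m - 2 ^ M.card) * 2 ^ N.card
      ≤ 2 ^ m * 2 ^ m * 2 ^ N.card := by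
    have h := mul_le_mul h4L (show (2 : ℤ) ^ m - 2 ^ M.card ≤ 2 ^ m by linarith)
      (by linarith) (by linarith)
    exact mul_le_mul_of_nonneg_right h hZN.le
  have k3 : (4 * (2 : ℤ) ^ L.card) * (4 * 2 ^ M.card) * 2 ^ N.card
      ≤ 2 ^ m * 2 ^ m * 2 ^ N.card := by
    have h := mul_le_mul h4L h4M (by positivity) (by linarith)
    exact mul_le_mul_of_nonneg_right h hZN.le
  have pos1 : (0 : ℤ) ≤ ((2 : ℤ) ^ m - 2 ^ L.card) * 2 ^ M.card * 2 ^ N.card :=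
    mul_nonneg (mul_nonneg (by linarith) hZM.le) hZN.le
  have pos2 : (0 : ℤ) ≤ (2 : ℤ) ^ L.card * ((2 : ℤ) ^ m - 2 ^ M.card) * 2 ^ N.card :=
    mul_nonneg (mul_nonneg hZL.le (by linarith)) hZN.le
  have pos3 : (0 : ℤ) ≤ (2 : ℤ) ^ L.card * 2 ^ M.card * 2 ^ N.card := by positivity
  have hcardA : (((Δ L)ᶜ.card : ℤ)) = 2 ^ m - 2 ^ L.card := by
    rw [Finset.card_compl, Nat.cast_sub (Finset.card_le_univ _), card_Δ, card_V]
    push_cast; ring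
  have hcardB : (((Δ M)ᶜ.card : ℤ)) = 2 ^ m - 2 ^ M.card := by
    rw [Finset.card_compl, Nat.cast_sub (Finset.card_le_univ _), card_Δ, card_V]
    push_cast; ring
  have hcardN : (((Δ N).card : ℤ)) = 2 ^ N.card := by rw [card_Δ]; push_cast; ring
  by_cases hβN : (supp β ∩ N).Nonempty
  · rw [sum_eps_Δ_inter hβN, mul_zero, mul_zero]
    constructor <;> nlinarith [q0]
  · rw [sum_eps_Δ_disj hβN, hcardN]
    by_cases hα0 : α = 0
    · have hSA : ∑ v ∈ (Δ L)ᶜ, eps (dot α v) = ((Δ L)ᶜ.card : ℤ) :=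
        sum_eps_const _ _ fun v _ => by rw [hα0, dot_zero_left]
      rw [hSA, hcardA]
      by_cases hβγ0 : β + γ = 0
      · exact absurd (codeMap_eq_zero hα0 hβγ0 hβN) hnz
      · by_cases hβγM : (supp (β + γ) ∩ M).Nonempty
        · rw [sum_eps_compl_inter hβγM]
          constructor <;> nlinarith [q0]
        · rw [sum_eps_compl_disj hβγ0 hβγM, card_Δ]
          push_cast
          constructor <;> nlinarith [q0, k1, pos1]
    · by_cases hαL : (supp α ∩ L).Nonempty
      · rw [sum_eps_compl_inter hαL]
        constructor <;> nlinarith [q0]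
      · rw [sum_eps_compl_disj hα0 hαL, card_Δ]
        push_cast
        by_cases hβγ0 : β + γ = 0
        · have hSB : ∑ v ∈ (Δ M)ᶜ, eps (dot (β + γ) v) = ((Δ M)ᶜ.card : ℤ) :=
            sum_eps_const _ _ fun v _ => by rw [hβγ0, dot_zero_left]
          rw [hSB, hcardB]
          constructor <;> nlinarith [q0, k2, pos2]
        · by_cases hβγM : (supp (β + γ) ∩ M).Nonempty
          · rw [sum_eps_compl_inter hβγM]
            constructor <;> nlinarith [q0]
          · rw [sum_eps_compl_disj hβγ0 hβγM, card_Δ]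
            push_cast
            constructor <;> nlinarith [q0, k3, pos3]

set_option maxHeartbeats 1600000 in
lemma wt_bounds {L M N : Finset (Fin m)} (hL2 : L.card + 2 ≤ m) (hM2 : M.card + 2 ≤ m)
    (α β γ : V m) (hnz : codeMap (Δ L)ᶜ (Δ M)ᶜ (Δ N) (α, β, γ) ≠ 0) :
    16 * (((Δ L)ᶜ.card : ℤ) * ((Δ M)ᶜ.card : ℤ) * ((Δ N).card : ℤ))
        - (2 : ℤ) ^ m * 2 ^ m * 2 ^ N.card
      ≤ 32 * ((Finset.univ.filter
          fun d => codeMap (Δ L)ᶜ (Δ M)ᶜ (Δ N) (α, β, γ) d ≠ 0).card : ℤ)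
    ∧ 32 * ((Finset.univ.filter
          fun d => codeMap (Δ L)ᶜ (Δ M)ᶜ (Δ N) (α, β, γ) d ≠ 0).card : ℤ)
      ≤ 16 * (((Δ L)ᶜ.card : ℤ) * ((Δ M)ᶜ.card : ℤ) * ((Δ N).card : ℤ))
          + 4 * ((2 : ℤ) ^ m * 2 ^ m * 2 ^ N.card) := by
  have h := two_mul_wt ((Δ L)ᶜ) ((Δ M)ᶜ) (Δ N) α β γ
  obtain ⟨h1, h2⟩ := prod_bounds hL2 hM2 α β γ hnz
  constructor <;> linarith

end Stmt16Aux

set_option maxHeartbeats 1600000 in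
open Stmt16Aux in
/-- Theorem 4.2, row 5: if `max{|L|,|M|} ≤ m − 2` then
`C(Δ_L^c, Δ_M^c, Δ_N)` is minimal, and if `|N| ≥ 3` it is self-orthogonal. -/
theorem stmt16 (m : ℕ) (hm : 1 ≤ m) (L M N : Finset (Fin m))
    (hL : L ⊂ Finset.univ) (hM : M ⊂ Finset.univ) :
    (max L.card M.card + 2 ≤ m →
      IsMinimalCode (SetLike.coe (LinearMap.range (codeMap (Δ L)ᶜ (Δ M)ᶜ (Δ N))))) ∧
    (3 ≤ N.card →
      IsSelfOrthogonal (SetLike.coe (LinearMap.range (codeMap (Δ L)ᶜ (Δ M)ᶜ (Δ N))))) := by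
  constructor
  · -- minimality
    intro hmax
    have hL2 : L.card + 2 ≤ m := le_trans (by simp [Nat.add_le_add_iff_right, le_max_left]) hmax
    have hM2 : M.card + 2 ≤ m := le_trans (by simp [Nat.add_le_add_iff_right, le_max_right]) hmax
    intro u hu hu0 v hv hv0 hsub
    by_contra hne
    rw [SetLike.mem_coe, LinearMap.mem_range] at hu hv
    obtain ⟨⟨α, β, γ⟩, rfl⟩ := hu
    obtain ⟨⟨α', β', γ'⟩, rfl⟩ := hv
    set f := codeMap (m := m) ((Δ L)ᶜ) ((Δ M)ᶜ) (Δ N) with hf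
    -- the difference codeword
    have hw : f (α, β, γ) + f (α', β', γ') = f (α + α', β + β', γ + γ') := by
      rw [← map_add]; rfl
    have hwnz : f (α + α', β + β', γ + γ') ≠ 0 := by
      rw [← hw]
      intro h
      apply hne
      funext d
      have h2 := congrFun h d
      have key : ∀ a b : ZMod 2, a + b = 0 → b = a := by decide
      exact key _ _ h2
    -- weight additivity
    have hsplit := wt_split (f (α, β, γ)) (f (α', β', γ'))
      (fun d hd => hsub (Function.mem_support.mpr hd))
    rw [show f (α, β, γ) + f (α', β', γ') = f (α + α', β + β', γ + γ') from hw] at hsplit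
    -- bounds
    obtain ⟨hu1, hu2⟩ := wt_bounds hL2 hM2 α β γ hu0
    obtain ⟨hv1, hv2⟩ := wt_bounds hL2 hM2 α' β' γ' hv0
    obtain ⟨hw1, hw2⟩ := wt_bounds hL2 hM2 (α + α') (β + β') (γ + γ') hwnz
    -- numeric facts
    have h4L : 4 * (2 : ℤ) ^ L.card ≤ 2 ^ m := by
      calc 4 * (2 : ℤ) ^ L.card = 2 ^ (L.card + 2) := by ring
      _ ≤ 2 ^ m := pow_le_pow_right₀ (by norm_num) hL2
    have h4M : 4 * (2 : ℤ) ^ M.card ≤ 2 ^ m := by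
      calc 4 * (2 : ℤ) ^ M.card = 2 ^ (M.card + 2) := by ring
      _ ≤ 2 ^ m := pow_le_pow_right₀ (by norm_num) hM2
    have hZN : (0 : ℤ) < 2 ^ N.card := by positivity
    have hP : (0 : ℤ) < 2 ^ m := by positivity
    have hcardA : (((Δ L)ᶜ.card : ℤ)) = 2 ^ m - 2 ^ L.card := by
      rw [Finset.card_compl, Nat.cast_sub (Finset.card_le_univ _), card_Δ, card_V]
      push_cast; ring
    have hcardB : (((Δ M)ᶜ.card : ℤ)) = 2 ^ m - 2 ^ M.card := by
      rw [Finset.card_compl, Nat.cast_sub (Finset.card_le_univ _), card_Δ, card_V]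
      push_cast; ring
    have hcardN : (((Δ N).card : ℤ)) = 2 ^ N.card := by rw [card_Δ]; push_cast; ring
    have hn : 9 * ((2 : ℤ) ^ m * 2 ^ m * 2 ^ N.card)
        ≤ 16 * (((Δ L)ᶜ.card : ℤ) * ((Δ M)ᶜ.card : ℤ) * ((Δ N).card : ℤ)) := by
      rw [hcardA, hcardB, hcardN]
      have e1 : 3 * (2 : ℤ) ^ m ≤ 4 * ((2 : ℤ) ^ m - 2 ^ L.card) := by linarith
      have e2 : 3 * (2 : ℤ) ^ m ≤ 4 * ((2 : ℤ) ^ m - 2 ^ M.card) := by linarith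
      have e3 : (3 * (2 : ℤ) ^ m) * (3 * (2 : ℤ) ^ m)
          ≤ (4 * ((2 : ℤ) ^ m - 2 ^ L.card)) * (4 * ((2 : ℤ) ^ m - 2 ^ M.card)) :=
        mul_le_mul e1 e2 (by positivity) (by linarith)
      have e4 := mul_le_mul_of_nonneg_right e3 hZN.le
      nlinarith [e4]
    have hsplit' : ((Finset.univ.filter fun d => f (α, β, γ) d ≠ 0).card : ℤ)
        = ((Finset.univ.filter fun d => f (α', β', γ') d ≠ 0).card : ℤ)
          + ((Finset.univ.filter fun d => f (α + α', β + β', γ + γ') d ≠ 0).card : ℤ) := by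
      exact_mod_cast congrArg (Nat.cast : ℕ → ℤ) hsplit
    rw [hf] at hsplit'
    have hQ : (0 : ℤ) < 2 ^ m * 2 ^ m * 2 ^ N.card := by positivity
    linarith
  · -- self-orthogonality
    intro hN c hc c' hc'
    rw [SetLike.mem_coe, LinearMap.mem_range] at hc hc'
    obtain ⟨⟨α, β, γ⟩, rfl⟩ := hc
    obtain ⟨⟨α', β', γ'⟩, rfl⟩ := hc'
    rw [Fintype.sum_prod_type]
    apply Finset.sum_eq_zero
    intro d₁ _
    rw [Fintype.sum_prod_type]
    apply Finset.sum_eq_zero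
    intro d₂ _
    have step : ∀ d₃ : {x // x ∈ Δ N},
        codeMap (Δ L)ᶜ (Δ M)ᶜ (Δ N) (α, β, γ) (d₁, d₂, d₃)
          * codeMap (Δ L)ᶜ (Δ M)ᶜ (Δ N) (α', β', γ') (d₁, d₂, d₃)
        = ((dot α d₁.1 + dot (β + γ) d₂.1) + dot β d₃.1)
          * ((dot α' d₁.1 + dot (β' + γ') d₂.1) + dot β' d₃.1) := by
      intro d₃
      rw [codeMap_apply, codeMap_apply]
    rw [Finset.sum_congr rfl fun d₃ _ => step d₃]
    rw [Finset.sum_coe_sort (Δ N)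
      (fun v => ((dot α d₁.1 + dot (β + γ) d₂.1) + dot β v)
        * ((dot α' d₁.1 + dot (β' + γ') d₂.1) + dot β' v))]
    exact inner_zero hN _ _ β β'
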